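/- Theorem 2 (stability transfer): Assume the vector DDE setting with F ≡ 0 and the scalar auxiliary setting with F ≡ 0, that the scalar auxiliary DDE has exactly one solution on [t₀,∞) for each continuous nonnegative history, and that the trivial solution of the scalar auxiliary DDE is stable: for every ε > 0 there exists δ > 0 such that every solution y of the scalar auxiliary DDE with continuous nonnegative history ψ satisfying sup_{s ∈ [t₀−h̄,t₀]} ψ s < δ satisfies y t < ε for all t ≥ t₀. Then the trivial solution of the vector DDE is stable: for every ε > 0 there exists δ > 0 such that every solution x of the vector DDE with continuous history φ satisfying sup_{s ∈ [t₀−h̄,t₀]} ‖φ s‖ < δ satisfies ‖x t‖ < ε for all t ≥ t₀. -/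

import Mathlib

open MeasureTheory Filter Topology Matrix
open scoped Matrix.Norms.L2Operator

noncomputable section

/-- `M *ᵥ v`, viewed as an element of Euclidean space. -/
def Matrix.mulVecE {n : ℕ} (M : Matrix (Fin n) (Fin n) ℝ) (v : EuclideanSpace ℝ (Fin n)) :
    EuclideanSpace ℝ (Fin n) :=
  WithLp.toLp 2 (M.mulVec v)

/-- `x` is a solution of the vector DDE
`x'(t) = A t *ᵥ x t + f t (fun i => x (t - H i t)) + F t` for `t ≥ t₀`,
with continuous history `φ` on `[t₀ - hb, t₀]`. -/
def IsVectorDDESol (n m : ℕ) (t₀ hb : ℝ) (H : Fin (m + 1) → ℝ → ℝ)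
    (A : ℝ → Matrix (Fin n) (Fin n) ℝ)
    (f : ℝ → (Fin (m + 1) → EuclideanSpace ℝ (Fin n)) → EuclideanSpace ℝ (Fin n))
    (F : ℝ → EuclideanSpace ℝ (Fin n))
    (φ x : ℝ → EuclideanSpace ℝ (Fin n)) : Prop :=
  Continuous x ∧ (∀ t ∈ Set.Icc (t₀ - hb) t₀, x t = φ t) ∧
    ∀ t ≥ t₀, HasDerivAt x ((A t).mulVecE (x t) + f t (fun i => x (t - H i t)) + F t) t

/-- `y` is a solution of the scalar auxiliary DDE
`y'(t) = p t * y t + c t * (L t (fun i => y (t - H i t)) + G t)` for `t ≥ t₀`,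
with history `ψ` on `[t₀ - hb, t₀]`. -/
def IsScalarDDESol (m : ℕ) (t₀ hb : ℝ) (H : Fin (m + 1) → ℝ → ℝ)
    (p c : ℝ → ℝ) (L : ℝ → (Fin (m + 1) → ℝ) → ℝ) (G : ℝ → ℝ)
    (ψ y : ℝ → ℝ) : Prop :=
  Continuous y ∧ (∀ t ∈ Set.Icc (t₀ - hb) t₀, y t = ψ t) ∧
    ∀ t ≥ t₀, HasDerivAt y (p t * y t + c t * (L t (fun i => y (t - H i t)) + G t)) t

/-!
Let `w` be the fundamental matrix of `x' = A x`. Variation of constants bounds a solution of the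
vector equation by `‖x t‖ ≤ ‖w t‖ (‖x t₀‖ + ∫ ‖(w s)⁻¹‖ ‖f s (x delayed) + F s‖)`, and, because
`‖w‖ = exp ∫ p` and `c = ‖w‖ ‖w⁻¹‖`, the same formula holds with equality for the scalar solution,
with `L s (y delayed) + ‖F s‖` in the integrand. As `L` is monotone and majorizes `f`, the strict
inequality `‖x‖ < y` holds up to a first contact time and is therefore never lost. The scalar
solution is started from the history `‖φ‖ + δ/2`, strictly above `‖φ‖` and still below the stability
threshold `δ`, so it stays below `ε`, and hence so does `‖x‖`.
-/

namespace Matrix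

variable {n : ℕ}

theorem hasDerivAt_inv {ι : Type*} [Fintype ι] [DecidableEq ι] {w : ℝ → Matrix ι ι ℝ}
    {w' : Matrix ι ι ℝ} {t : ℝ} (hw : HasDerivAt w w' t) (hwt : IsUnit (w t)) :
    HasDerivAt (fun s => (w s)⁻¹) (-((w t)⁻¹ * w' * (w t)⁻¹)) t := by
  have : CompleteSpace (Matrix ι ι ℝ) := FiniteDimensional.complete ℝ _
  obtain ⟨u, hu⟩ := hwt
  have h := (hu ▸ hasFDerivAt_ringInverse (𝕜 := ℝ) u).comp_hasDerivAt t hw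
  simp only [Function.comp_def, ← nonsing_inv_eq_ringInverse] at h
  refine h.congr_deriv ?_
  simp only [_root_.neg_apply, ContinuousLinearMap.mulLeftRight_apply, coe_units_inv, hu]

theorem mulVecE_eq_toEuclideanCLM (M : Matrix (Fin n) (Fin n) ℝ) (v : EuclideanSpace ℝ (Fin n)) :
    M.mulVecE v = toEuclideanCLM (𝕜 := ℝ) M v := rfl

theorem mulVecE_add (M : Matrix (Fin n) (Fin n) ℝ) (v v' : EuclideanSpace ℝ (Fin n)) :
    M.mulVecE (v + v') = M.mulVecE v + M.mulVecE v' :=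
  map_add (toEuclideanCLM (𝕜 := ℝ) M) v v'

theorem neg_mulVecE (M : Matrix (Fin n) (Fin n) ℝ) (v : EuclideanSpace ℝ (Fin n)) :
    (-M).mulVecE v = -M.mulVecE v := by
  simp [mulVecE_eq_toEuclideanCLM]

theorem mulVecE_mulVecE (M N : Matrix (Fin n) (Fin n) ℝ) (v : EuclideanSpace ℝ (Fin n)) :
    M.mulVecE (N.mulVecE v) = (M * N).mulVecE v := by
  simp [mulVecE_eq_toEuclideanCLM]

theorem one_mulVecE (v : EuclideanSpace ℝ (Fin n)) :
    (1 : Matrix (Fin n) (Fin n) ℝ).mulVecE v = v := by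
  simp [mulVecE_eq_toEuclideanCLM]

theorem norm_mulVecE_le (M : Matrix (Fin n) (Fin n) ℝ) (v : EuclideanSpace ℝ (Fin n)) :
    ‖M.mulVecE v‖ ≤ ‖M‖ * ‖v‖ :=
  (toEuclideanCLM (𝕜 := ℝ) M).le_opNorm v

theorem _root_.HasDerivAt.mulVecE {M : ℝ → Matrix (Fin n) (Fin n) ℝ}
    {v : ℝ → EuclideanSpace ℝ (Fin n)} {M' : Matrix (Fin n) (Fin n) ℝ}
    {v' : EuclideanSpace ℝ (Fin n)} {t : ℝ} (hM : HasDerivAt M M' t) (hv : HasDerivAt v v' t) :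
    HasDerivAt (fun s => (M s).mulVecE (v s)) (M'.mulVecE (v t) + (M t).mulVecE v') t :=
  ((LinearMap.toContinuousLinearMap (toEuclideanCLM (n := Fin n) (𝕜 := ℝ)).toAlgEquiv.toLinearMap
    ).hasFDerivAt.comp_hasDerivAt t hM).clm_apply hv

theorem _root_.Continuous.mulVecE {M : ℝ → Matrix (Fin n) (Fin n) ℝ}
    {v : ℝ → EuclideanSpace ℝ (Fin n)} (hM : Continuous M) (hv : Continuous v) :
    Continuous fun s => (M s).mulVecE (v s) :=
  ((LinearMap.toContinuousLinearMap (toEuclideanCLM (n := Fin n) (𝕜 := ℝ)).toAlgEquiv.toLinearMap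
    ).continuous.comp hM).clm_apply hv

end Matrix

section VariationOfConstants

variable {n : ℕ} {A w : ℝ → Matrix (Fin n) (Fin n) ℝ}

theorem hasDerivAt_inv_of_hasDerivAt_mul {t : ℝ} (hwt : IsUnit (w t))
    (hw' : HasDerivAt w (A t * w t) t) :
    HasDerivAt (fun s => (w s)⁻¹) (-((w t)⁻¹ * A t)) t := by
  refine (Matrix.hasDerivAt_inv hw' hwt).congr_deriv ?_
  rw [← mul_assoc, Matrix.mul_nonsing_inv_cancel_right _ _ ((w t).isUnit_iff_isUnit_det.mp hwt)]

theorem continuous_inv_of_hasDerivAt_mul (hwUnit : ∀ t, IsUnit (w t))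
    (hw' : ∀ t, HasDerivAt w (A t * w t) t) : Continuous fun t => (w t)⁻¹ :=
  continuous_iff_continuousAt.2 fun t =>
    (hasDerivAt_inv_of_hasDerivAt_mul (hwUnit t) (hw' t)).continuousAt

theorem eq_mulVecE_add_integral_of_hasDerivAt {x g : ℝ → EuclideanSpace ℝ (Fin n)} {t₀ τ : ℝ}
    (hw₀ : w t₀ = 1) (hwUnit : ∀ t, IsUnit (w t)) (hw' : ∀ t, HasDerivAt w (A t * w t) t)
    (hg : Continuous g) (hx : ∀ t ≥ t₀, HasDerivAt x ((A t).mulVecE (x t) + g t) t)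
    (hτ : t₀ ≤ τ) :
    x τ = (w τ).mulVecE (x t₀ + ∫ s in t₀..τ, ((w s)⁻¹).mulVecE (g s)) := by
  have hFTC : ∫ s in t₀..τ, ((w s)⁻¹).mulVecE (g s) =
      ((w τ)⁻¹).mulVecE (x τ) - ((w t₀)⁻¹).mulVecE (x t₀) := by
    refine intervalIntegral.integral_eq_sub_of_hasDerivAt
      (f := fun s => ((w s)⁻¹).mulVecE (x s)) (fun s hs => ?_)
      (((continuous_inv_of_hasDerivAt_mul hwUnit hw').mulVecE hg).intervalIntegrable _ _)
    rw [Set.uIcc_of_le hτ] at hs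
    refine ((hasDerivAt_inv_of_hasDerivAt_mul (hwUnit s) (hw' s)).mulVecE
      (hx s hs.1)).congr_deriv ?_
    rw [Matrix.neg_mulVecE, Matrix.mulVecE_add, Matrix.mulVecE_mulVecE]
    abel
  rw [hFTC, hw₀, inv_one, Matrix.one_mulVecE, add_sub_cancel, Matrix.mulVecE_mulVecE,
    Matrix.mul_nonsing_inv _ ((w τ).isUnit_iff_isUnit_det.mp (hwUnit τ)), Matrix.one_mulVecE]

theorem norm_le_of_hasDerivAt_mulVecE_add {x g : ℝ → EuclideanSpace ℝ (Fin n)} {t₀ τ : ℝ}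
    (hw₀ : w t₀ = 1) (hwUnit : ∀ t, IsUnit (w t)) (hw' : ∀ t, HasDerivAt w (A t * w t) t)
    (hg : Continuous g) (hx : ∀ t ≥ t₀, HasDerivAt x ((A t).mulVecE (x t) + g t) t)
    (hτ : t₀ ≤ τ) :
    ‖x τ‖ ≤ ‖w τ‖ * (‖x t₀‖ + ∫ s in t₀..τ, ‖(w s)⁻¹‖ * ‖g s‖) := by
  have hint : ‖∫ s in t₀..τ, ((w s)⁻¹).mulVecE (g s)‖ ≤ ∫ s in t₀..τ, ‖(w s)⁻¹‖ * ‖g s‖ :=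
    intervalIntegral.norm_integral_le_of_norm_le hτ
      (Eventually.of_forall fun s _ => Matrix.norm_mulVecE_le _ _)
      (((continuous_inv_of_hasDerivAt_mul hwUnit hw').norm.mul hg.norm).intervalIntegrable _ _)
  rw [eq_mulVecE_add_integral_of_hasDerivAt hw₀ hwUnit hw' hg hx hτ]
  exact (Matrix.norm_mulVecE_le _ _).trans
    (by gcongr; exact (norm_add_le _ _).trans (by gcongr))

end VariationOfConstants

theorem eq_exp_integral_mul_add_integral_of_hasDerivAt {p b y : ℝ → ℝ} {t₀ τ : ℝ}
    (hp : Continuous p) (hb : Continuous b) (hy : ∀ t ≥ t₀, HasDerivAt y (p t * y t + b t) t)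
    (hτ : t₀ ≤ τ) :
    y τ = Real.exp (∫ s in t₀..τ, p s) *
      (y t₀ + ∫ s in t₀..τ, Real.exp (-∫ r in t₀..s, p r) * b s) := by
  set I : ℝ → ℝ := fun t => ∫ s in t₀..t, p s
  have hI : ∀ t, HasDerivAt I (p t) t := fun t => (hp.integral_hasStrictDerivAt t₀ t).hasDerivAt
  have hFTC : ∫ s in t₀..τ, Real.exp (-I s) * b s =
      Real.exp (-I τ) * y τ - Real.exp (-I t₀) * y t₀ := by
    refine intervalIntegral.integral_eq_sub_of_hasDerivAt
      (f := fun s => Real.exp (-I s) * y s) (fun s hs => ?_)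
      ((continuous_iff_continuousAt.2 fun t => (hI t).continuousAt).neg.rexp.mul hb
        |>.intervalIntegrable _ _)
    rw [Set.uIcc_of_le hτ] at hs
    refine ((hI s).neg.exp.mul (hy s hs.1)).congr_deriv ?_
    rw [Pi.neg_apply]
    ring
  rw [hFTC, show I t₀ = 0 from intervalIntegral.integral_same, neg_zero, Real.exp_zero, one_mul,
    add_sub_cancel, ← mul_assoc, ← Real.exp_add, add_neg_cancel, Real.exp_zero, one_mul]

theorem forall_ge_lt_of_forall_le_imp_lt {u y : ℝ → ℝ} {a t₀ : ℝ} (hu : Continuous u)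
    (hy : Continuous y) (ha : a < t₀) (hhist : ∀ s ∈ Set.Icc a t₀, u s < y s)
    (hstep : ∀ t > t₀, (∀ s ∈ Set.Icc a t, u s ≤ y s) → u t < y t) :
    ∀ t ≥ t₀, u t < y t := by
  by_contra! hcon
  set S := {t | t₀ ≤ t ∧ y t ≤ u t}
  have hSbdd : BddBelow S := ⟨t₀, fun t ht => ht.1⟩
  have ht₁ : sInf S ∈ S :=
    ((isClosed_le continuous_const continuous_id).inter (isClosed_le hy hu)).csInf_mem hcon hSbdd
  have hlt : t₀ < sInf S :=
    ht₁.1.lt_of_ne fun h => (hhist t₀ ⟨ha.le, le_rfl⟩).not_ge (h ▸ ht₁.2)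
  have hIco : Set.Ico a (sInf S) ⊆ {s | u s ≤ y s} := fun s hs => by
    rcases le_or_gt s t₀ with hs₀ | hs₀
    · exact (hhist s ⟨hs.1, hs₀⟩).le
    · exact le_of_not_ge fun h => hs.2.not_ge (csInf_le hSbdd ⟨hs₀.le, h⟩)
  have hIcc : Set.Icc a (sInf S) ⊆ {s | u s ≤ y s} := by
    rw [← closure_Ico (ha.trans hlt).ne]
    exact (isClosed_le hu hy).closure_subset_iff.mpr hIco
  exact (hstep _ hlt hIcc).not_ge ht₁.2

theorem sSup_image_add_const_le {α : Type*} {f : α → ℝ} {s : Set α} (hs : s.Nonempty)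
    (hf : BddAbove (f '' s)) (c : ℝ) :
    sSup ((fun x => f x + c) '' s) ≤ sSup (f '' s) + c :=
  csSup_le (hs.image _) <| by
    rintro _ ⟨x, hx, rfl⟩
    exact add_le_add_left (le_csSup hf ⟨x, hx, rfl⟩) c

theorem Continuous.apply_delayed {ι E F : Type*} [Fintype ι] [TopologicalSpace E]
    [TopologicalSpace F] {Φ : ℝ → (ι → E) → F}
    (hΦ : Continuous fun q : ℝ × (ι → E) => Φ q.1 q.2) {H : ι → ℝ → ℝ}
    (hH : ∀ i, Continuous (H i)) {x : ℝ → E} (hx : Continuous x) :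
    Continuous fun s => Φ s fun i => x (s - H i s) :=
  hΦ.comp (continuous_id.prodMk (continuous_pi fun i => hx.comp (continuous_id.sub (hH i))))

theorem IsVectorDDESol.norm_le {n m : ℕ} {t₀ hb : ℝ} {H : Fin (m + 1) → ℝ → ℝ}
    {A w : ℝ → Matrix (Fin n) (Fin n) ℝ}
    {f : ℝ → (Fin (m + 1) → EuclideanSpace ℝ (Fin n)) → EuclideanSpace ℝ (Fin n)}
    {F φ x : ℝ → EuclideanSpace ℝ (Fin n)} (hH : ∀ i, Continuous (H i))
    (hf : Continuous fun q : ℝ × (Fin (m + 1) → EuclideanSpace ℝ (Fin n)) => f q.1 q.2)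
    (hF : Continuous F) (hw₀ : w t₀ = 1) (hwUnit : ∀ t, IsUnit (w t))
    (hw' : ∀ t, HasDerivAt w (A t * w t) t) (hx : IsVectorDDESol n m t₀ hb H A f F φ x)
    {τ : ℝ} (hτ : t₀ ≤ τ) :
    ‖x τ‖ ≤ ‖w τ‖ *
      (‖x t₀‖ + ∫ s in t₀..τ, ‖(w s)⁻¹‖ * ‖f s (fun i => x (s - H i s)) + F s‖) :=
  norm_le_of_hasDerivAt_mulVecE_add hw₀ hwUnit hw' ((hf.apply_delayed hH hx.1).add hF)
    (fun t ht => by simpa only [add_assoc] using hx.2.2 t ht) hτ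

theorem IsScalarDDESol.eq_norm_mul {n m : ℕ} {t₀ hb : ℝ} {H : Fin (m + 1) → ℝ → ℝ}
    {p c G ψ y : ℝ → ℝ} {L : ℝ → (Fin (m + 1) → ℝ) → ℝ} {w : ℝ → Matrix (Fin n) (Fin n) ℝ}
    (hH : ∀ i, Continuous (H i)) (hL : Continuous fun q : ℝ × (Fin (m + 1) → ℝ) => L q.1 q.2)
    (hG : Continuous G) (hp : Continuous p) (hw : Continuous w)
    (hwinv : Continuous fun t => (w t)⁻¹)
    (hwp : ∀ t ≥ t₀, ‖w t‖ = Real.exp (∫ s in t₀..t, p s))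
    (hc : ∀ t, c t = ‖w t‖ * ‖(w t)⁻¹‖) (hy : IsScalarDDESol m t₀ hb H p c L G ψ y)
    {τ : ℝ} (hτ : t₀ ≤ τ) :
    y τ = ‖w τ‖ * (y t₀ + ∫ s in t₀..τ, ‖(w s)⁻¹‖ * (L s (fun i => y (s - H i s)) + G s)) := by
  have hcc : Continuous c := (funext hc : c = _) ▸ hw.norm.mul hwinv.norm
  rw [eq_exp_integral_mul_add_integral_of_hasDerivAt
    (b := fun t => c t * (L t (fun i => y (t - H i t)) + G t)) hp
    (hcc.mul ((hL.apply_delayed hH hy.1).add hG)) hy.2.2 hτ, ← hwp τ hτ]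
  congr 2
  refine intervalIntegral.integral_congr fun s hs => ?_
  rw [Set.uIcc_of_le hτ] at hs
  have hws : ‖w s‖ ≠ 0 := hwp s hs.1 ▸ Real.exp_ne_zero _
  rw [hc s, Real.exp_neg, ← hwp s hs.1, ← mul_assoc, ← mul_assoc, inv_mul_cancel₀ hws, one_mul]

theorem IsVectorDDESol.norm_lt_of_isScalarDDESol {n m : ℕ} {t₀ hb : ℝ} (hhb : 0 < hb)
    {H : Fin (m + 1) → ℝ → ℝ} (hH : ∀ i, Continuous (H i)) (hHnonneg : ∀ i t, 0 ≤ H i t)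
    (hHle : ∀ i t, H i t ≤ hb) {A w : ℝ → Matrix (Fin n) (Fin n) ℝ}
    {f : ℝ → (Fin (m + 1) → EuclideanSpace ℝ (Fin n)) → EuclideanSpace ℝ (Fin n)}
    (hf : Continuous fun q : ℝ × (Fin (m + 1) → EuclideanSpace ℝ (Fin n)) => f q.1 q.2)
    {F : ℝ → EuclideanSpace ℝ (Fin n)} (hF : Continuous F)
    (hw₀ : w t₀ = 1) (hwUnit : ∀ t, IsUnit (w t)) (hw' : ∀ t, HasDerivAt w (A t * w t) t)
    {p c : ℝ → ℝ} (hp : Continuous p) (hwp : ∀ t ≥ t₀, ‖w t‖ = Real.exp (∫ s in t₀..t, p s))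
    (hc : ∀ t, c t = ‖w t‖ * ‖(w t)⁻¹‖) {L : ℝ → (Fin (m + 1) → ℝ) → ℝ}
    (hL : Continuous fun q : ℝ × (Fin (m + 1) → ℝ) => L q.1 q.2)
    (hLmono : ∀ t ζ ζ', (∀ i, ζ i ≤ ζ' i) → L t ζ ≤ L t ζ')
    (hLf : ∀ t ≥ t₀, ∀ χ : Fin (m + 1) → EuclideanSpace ℝ (Fin n),
      ‖f t χ‖ ≤ L t fun i => ‖χ i‖)
    {φ x : ℝ → EuclideanSpace ℝ (Fin n)} {ψ y : ℝ → ℝ}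
    (hx : IsVectorDDESol n m t₀ hb H A f F φ x)
    (hy : IsScalarDDESol m t₀ hb H p c L (fun t => ‖F t‖) ψ y)
    (hφψ : ∀ s ∈ Set.Icc (t₀ - hb) t₀, ‖φ s‖ < ψ s) :
    ∀ t ≥ t₀, ‖x t‖ < y t := by
  have hhist : ∀ s ∈ Set.Icc (t₀ - hb) t₀, ‖x s‖ < y s := fun s hs => by
    rw [hx.2.1 s hs, hy.2.1 s hs]
    exact hφψ s hs
  have hwinv := continuous_inv_of_hasDerivAt_mul hwUnit hw'
  have hw : Continuous w := continuous_iff_continuousAt.2 fun t => (hw' t).continuousAt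
  refine forall_ge_lt_of_forall_le_imp_lt hx.1.norm hy.1 (by linarith) hhist fun t₁ ht₁ hle => ?_
  have hforce : ∀ s ∈ Set.Icc t₀ t₁,
      ‖f s (fun i => x (s - H i s)) + F s‖ ≤ L s (fun i => y (s - H i s)) + ‖F s‖ :=
    fun s hs => (norm_add_le _ _).trans <| by
      gcongr
      refine (hLf s hs.1 _).trans (hLmono s _ _ fun i => hle _ ⟨?_, ?_⟩)
      · linarith [hHle i s, hs.1]
      · linarith [hHnonneg i s, hs.2]
  have hint : ∫ s in t₀..t₁, ‖(w s)⁻¹‖ * ‖f s (fun i => x (s - H i s)) + F s‖ ≤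
      ∫ s in t₀..t₁, ‖(w s)⁻¹‖ * (L s (fun i => y (s - H i s)) + ‖F s‖) :=
    intervalIntegral.integral_mono_on ht₁.le
      ((hwinv.norm.mul ((hf.apply_delayed hH hx.1).add hF).norm).intervalIntegrable _ _)
      ((hwinv.norm.mul ((hL.apply_delayed hH hy.1).add hF.norm)).intervalIntegrable _ _)
      fun s hs => mul_le_mul_of_nonneg_left (hforce s hs) (norm_nonneg _)
  have hwpos : 0 < ‖w t₁‖ := hwp t₁ ht₁.le ▸ Real.exp_pos _
  calc ‖x t₁‖
      ≤ ‖w t₁‖ * (‖x t₀‖ + ∫ s in t₀..t₁, ‖(w s)⁻¹‖ * ‖f s (fun i => x (s - H i s)) + F s‖) :=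
        hx.norm_le hH hf hF hw₀ hwUnit hw' ht₁.le
    _ < ‖w t₁‖ * (y t₀ + ∫ s in t₀..t₁, ‖(w s)⁻¹‖ * (L s (fun i => y (s - H i s)) + ‖F s‖)) := by
        have ht₀ : t₀ ∈ Set.Icc (t₀ - hb) t₀ := ⟨by linarith, le_rfl⟩
        exact mul_lt_mul_of_pos_left (add_lt_add_of_lt_of_le (hhist t₀ ht₀) hint) hwpos
    _ = y t₁ := (hy.eq_norm_mul hH hL hF.norm hp hw hwinv hwp hc ht₁.le).symm

theorem thm2_stability_transfer_general
    (n m : ℕ) (t₀ hb : ℝ) (hhb : 0 < hb)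
    (H : Fin (m + 1) → ℝ → ℝ) (hHcont : ∀ i, Continuous (H i))
    (hHnonneg : ∀ i t, 0 ≤ H i t) (hHle : ∀ i t, H i t ≤ hb)
    (A : ℝ → Matrix (Fin n) (Fin n) ℝ)
    (f : ℝ → (Fin (m + 1) → EuclideanSpace ℝ (Fin n)) → EuclideanSpace ℝ (Fin n))
    (hf : Continuous fun q : ℝ × (Fin (m + 1) → EuclideanSpace ℝ (Fin n)) => f q.1 q.2)
    (F : ℝ → EuclideanSpace ℝ (Fin n)) (hF : Continuous F)
    (w : ℝ → Matrix (Fin n) (Fin n) ℝ)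
    (hw₀ : w t₀ = 1) (hwUnit : ∀ t, IsUnit (w t))
    (hw' : ∀ t, HasDerivAt w (A t * w t) t)
    (p : ℝ → ℝ) (hp : Continuous p)
    (hwp : ∀ t ≥ t₀, ‖w t‖ = Real.exp (∫ s in t₀..t, p s))
    (c : ℝ → ℝ) (hc : ∀ t, c t = ‖w t‖ * ‖(w t)⁻¹‖)
    (L : ℝ → (Fin (m + 1) → ℝ) → ℝ)
    (hL : Continuous fun q : ℝ × (Fin (m + 1) → ℝ) => L q.1 q.2)
    (hLmono : ∀ t ζ ζ', (∀ i, ζ i ≤ ζ' i) → L t ζ ≤ L t ζ')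
    (hLf : ∀ t ≥ t₀, ∀ χ : Fin (m + 1) → EuclideanSpace ℝ (Fin n),
      ‖f t χ‖ ≤ L t fun i => ‖χ i‖)
    (hexist : ∀ ψ : ℝ → ℝ, Continuous ψ → (∀ s ∈ Set.Icc (t₀ - hb) t₀, 0 ≤ ψ s) →
      ∃ y : ℝ → ℝ, IsScalarDDESol m t₀ hb H p c L (fun t => ‖F t‖) ψ y)
    (hstab : ∀ ε > (0:ℝ), ∃ δ > (0:ℝ), ∀ ψ y : ℝ → ℝ, Continuous ψ →
      (∀ s ∈ Set.Icc (t₀ - hb) t₀, 0 ≤ ψ s) →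
      sSup (ψ '' Set.Icc (t₀ - hb) t₀) < δ →
      IsScalarDDESol m t₀ hb H p c L (fun t => ‖F t‖) ψ y → ∀ t ≥ t₀, y t < ε) :
    ∀ ε > (0:ℝ), ∃ δ > (0:ℝ), ∀ (φ x : ℝ → EuclideanSpace ℝ (Fin n)), Continuous φ →
      sSup ((fun s => ‖φ s‖) '' Set.Icc (t₀ - hb) t₀) < δ →
      IsVectorDDESol n m t₀ hb H A f F φ x → ∀ t ≥ t₀, ‖x t‖ < ε := by
  intro ε hε
  obtain ⟨δ, hδ, hstabδ⟩ := hstab ε hε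
  refine ⟨δ / 2, half_pos hδ, fun φ x hφ hφδ hx t ht => ?_⟩
  set ψ : ℝ → ℝ := fun s => ‖φ s‖ + δ / 2
  have hψ : Continuous ψ := hφ.norm.add continuous_const
  have hψnonneg : ∀ s ∈ Set.Icc (t₀ - hb) t₀, 0 ≤ ψ s := fun s _ => by positivity
  have hψδ : sSup (ψ '' Set.Icc (t₀ - hb) t₀) < δ :=
    (sSup_image_add_const_le (Set.nonempty_Icc.2 (by linarith))
      (isCompact_Icc.image hφ.norm).bddAbove _).trans_lt (by linarith)
  obtain ⟨y, hy⟩ := hexist ψ hψ hψnonneg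
  calc ‖x t‖ < y t := hx.norm_lt_of_isScalarDDESol hhb hHcont hHnonneg hHle hf hF hw₀ hwUnit hw'
        hp hwp hc hL hLmono hLf hy (fun s _ => lt_add_of_pos_right _ (half_pos hδ)) t ht
    _ < ε := hstabδ ψ y hψ hψnonneg hψδ hy t ht

/-- Theorem 2 (stability transfer): stability of the trivial solution of the scalar
auxiliary DDE implies stability of the trivial solution of the vector DDE. -/
theorem thm2_stability_transfer
    (n m : ℕ) (hn : 0 < n) (t₀ hb : ℝ) (hhb : 0 < hb)
    (H : Fin (m + 1) → ℝ → ℝ) (hHcont : ∀ i, Continuous (H i))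
    (hH0 : ∀ t, H 0 t = 0) (hHnonneg : ∀ i t, 0 ≤ H i t) (hHle : ∀ i t, H i t ≤ hb)
    (A : ℝ → Matrix (Fin n) (Fin n) ℝ) (hA : Continuous A)
    (f : ℝ → (Fin (m + 1) → EuclideanSpace ℝ (Fin n)) → EuclideanSpace ℝ (Fin n))
    (hf : Continuous fun q : ℝ × (Fin (m + 1) → EuclideanSpace ℝ (Fin n)) => f q.1 q.2)
    (hf0 : ∀ t, f t 0 = 0)
    (F : ℝ → EuclideanSpace ℝ (Fin n)) (hF : Continuous F)
    (hF0 : ∀ t, F t = 0)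
    (w : ℝ → Matrix (Fin n) (Fin n) ℝ)
    (hw₀ : w t₀ = 1) (hwUnit : ∀ t, IsUnit (w t))
    (hw' : ∀ t, HasDerivAt w (A t * w t) t)
    (p : ℝ → ℝ) (hp : Continuous p)
    (hwp : ∀ t ≥ t₀, ‖w t‖ = Real.exp (∫ s in t₀..t, p s))
    (c : ℝ → ℝ) (hc : ∀ t, c t = ‖w t‖ * ‖(w t)⁻¹‖)
    (L : ℝ → (Fin (m + 1) → ℝ) → ℝ)
    (hL : Continuous fun q : ℝ × (Fin (m + 1) → ℝ) => L q.1 q.2)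
    (hL0 : ∀ t, L t 0 = 0)
    (hLnonneg : ∀ t ζ, 0 ≤ L t ζ)
    (hLmono : ∀ t ζ ζ', (∀ i, ζ i ≤ ζ' i) → L t ζ ≤ L t ζ')
    (hLf : ∀ t ≥ t₀, ∀ χ : Fin (m + 1) → EuclideanSpace ℝ (Fin n),
      ‖f t χ‖ ≤ L t fun i => ‖χ i‖)
    (hexist : ∀ ψ : ℝ → ℝ, Continuous ψ → (∀ s ∈ Set.Icc (t₀ - hb) t₀, 0 ≤ ψ s) →
      ∃ y : ℝ → ℝ, IsScalarDDESol m t₀ hb H p c L (fun t => ‖F t‖) ψ y)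
    (huniq : ∀ ψ : ℝ → ℝ, Continuous ψ → (∀ s ∈ Set.Icc (t₀ - hb) t₀, 0 ≤ ψ s) →
      ∀ y₁ y₂ : ℝ → ℝ, IsScalarDDESol m t₀ hb H p c L (fun t => ‖F t‖) ψ y₁ →
        IsScalarDDESol m t₀ hb H p c L (fun t => ‖F t‖) ψ y₂ → ∀ t ≥ t₀, y₁ t = y₂ t)
    (hstab : ∀ ε > (0:ℝ), ∃ δ > (0:ℝ), ∀ ψ y : ℝ → ℝ, Continuous ψ →
      (∀ s ∈ Set.Icc (t₀ - hb) t₀, 0 ≤ ψ s) →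
      sSup (ψ '' Set.Icc (t₀ - hb) t₀) < δ →
      IsScalarDDESol m t₀ hb H p c L (fun t => ‖F t‖) ψ y → ∀ t ≥ t₀, y t < ε) :
    ∀ ε > (0:ℝ), ∃ δ > (0:ℝ), ∀ (φ x : ℝ → EuclideanSpace ℝ (Fin n)), Continuous φ →
      sSup ((fun s => ‖φ s‖) '' Set.Icc (t₀ - hb) t₀) < δ →
      IsVectorDDESol n m t₀ hb H A f F φ x → ∀ t ≥ t₀, ‖x t‖ < ε :=
  thm2_stability_transfer_general n m t₀ hb hhb H hHcont hHnonneg hHle A f hf F hF w hw₀ hwUnit hw'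
    p hp hwp c hc L hL hLmono hLf hexist hstab
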